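/- Let (W,S) be a Coxeter system with s_0 an even leaf, W' = ker χ_0 with its Coxeter structure (W',S'), and let θ: W^+ → W' be the bijection sending w to the unique element of {w, w s_0} in W'. Then for every w ∈ W^+: (i) ℓ_{R∪R^{-1}}(w) = ℓ_{S'}(θ(w)); (ii) θ is a poset isomorphism from (W^+, right weak order) to (W', right weak order); (iii) θ is a poset isomorphism from (W^+, right strong order) to (W', strong Bruhat order). -/

import Mathlib

open CoxeterSystem

namespace AltCox

variable {W : Type*} [Group W]

/-- Word length of `w` with respect to a generating set `A`:
the minimum length of a word in `A` whose product is `w`. -/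
noncomputable def glen (A : Set W) (w : W) : ℕ :=
  sInf {k | ∃ l : List W, (∀ x ∈ l, x ∈ A) ∧ l.prod = w ∧ l.length = k}

variable {n : ℕ} {M : CoxeterMatrix (Fin (n + 1))} (cs : CoxeterSystem M W)

/-- The alternating subgroup `W⁺`: the kernel of the sign character, i.e. the
set of elements of even Coxeter length. -/
def alt : Subgroup W where
  carrier := {w | Even (cs.length w)}
  one_mem' := by simp [Nat.even_iff]
  mul_mem' := by
    intro a b ha hb
    simp only [Set.mem_setOf_eq, Nat.even_iff] at *
    have := cs.length_mul_mod_two a b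
    omega
  inv_mem' := by
    intro a ha
    simpa [cs.length_inv] using ha

/-- The generating set `R = {r_i = s₀ sᵢ : i ≠ 0}` of `W⁺`. -/
def Rset : Set W := {x | ∃ i : Fin (n + 1), i ≠ 0 ∧ x = cs.simple 0 * cs.simple i}

/-- The symmetrized generating set `R ∪ R⁻¹`. -/
def Rsym : Set W := Rset cs ∪ (Rset cs)⁻¹

/-- `ν w`: the minimum number of letters different from `s₀` among all words
in the simple reflections whose product is `w`. -/
noncomputable def nu (w : W) : ℕ :=
  sInf {k | ∃ ω : List (Fin (n + 1)), cs.wordProd ω = w ∧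
    (ω.filter (fun i => i ≠ 0)).length = k}

/-- `τ w` is the unique element of `{w, w s₀}` lying in `W⁺`. -/
noncomputable def tau (w : W) : W :=
  if Even (cs.length w) then w else w * cs.simple 0

/-- `s₀` is evenly laced: `m₀ᵢ` is even or infinite (encoded by `0`) for all `i ≠ 0`. -/
def EvenlyLaced (M : CoxeterMatrix (Fin (n + 1))) : Prop :=
  ∀ i : Fin (n + 1), i ≠ 0 → Even (M 0 i)

/-- The set of all reflections of `(W, S)`. -/
def Tall : Set W := {t | cs.IsReflection t}

/-- The set `T̂` of reflections conjugate to some simple reflection other than `s₀`. -/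
def That : Set W := {t | ∃ w : W, ∃ i : Fin (n + 1), i ≠ 0 ∧ t = w * cs.simple i * w⁻¹}

/-- The set of odd palindromes of `W⁺` with respect to `R`. -/
def Palin : Set W :=
  {p | ∃ l : List W, (∀ x ∈ l, x ∈ Rsym cs) ∧ Odd l.length ∧ l.reverse = l ∧ l.prod = p}

/-- The set of left-shortening palindromes of `w`. -/
noncomputable def PL (w : W) : Set W :=
  {p ∈ Palin cs | glen (Rsym cs) (p * w) < glen (Rsym cs) w}

/-- The set of right-shortening palindromes of `w`. -/
noncomputable def PR (w : W) : Set W :=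
  {p ∈ Palin cs | glen (Rsym cs) (w * p) < glen (Rsym cs) w}

/-- The right weak order on `(W⁺, R)`. -/
noncomputable def rweak (u w : W) : Prop :=
  Relation.ReflTransGen
    (fun a b => ∃ r ∈ Rsym cs, b = a * r ∧
      glen (Rsym cs) b = glen (Rsym cs) a + 1) u w

/-- The left weak order on `(W⁺, R)`. -/
noncomputable def lweak (u w : W) : Prop :=
  Relation.ReflTransGen
    (fun a b => ∃ r ∈ Rsym cs, b = r * a ∧
      glen (Rsym cs) b = glen (Rsym cs) a + 1) u w

/-- The right strong order on `(W⁺, R)`. -/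
noncomputable def rstrong (u w : W) : Prop :=
  Relation.ReflTransGen
    (fun a b => ∃ p ∈ Palin cs, b = a * p ∧
      glen (Rsym cs) a < glen (Rsym cs) b) u w

/-- The left strong order on `(W⁺, R)`. -/
noncomputable def lstrong (u w : W) : Prop :=
  Relation.ReflTransGen
    (fun a b => ∃ p ∈ Palin cs, b = p * a ∧
      glen (Rsym cs) a < glen (Rsym cs) b) u w

/-- The strong Bruhat order on a Coxeter system. -/
noncomputable def bruhatLE {B : Type*} {M' : CoxeterMatrix B} {W' : Type*} [Group W']
    (cs' : CoxeterSystem M' W') (u w : W') : Prop :=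
  Relation.ReflTransGen
    (fun a b => ∃ t, cs'.IsReflection t ∧ b = a * t ∧ cs'.length a < cs'.length b) u w

/-- The right weak order of a Coxeter system. -/
noncomputable def coxRweak {B : Type*} {M' : CoxeterMatrix B} {W' : Type*} [Group W']
    (cs' : CoxeterSystem M' W') (u w : W') : Prop :=
  Relation.ReflTransGen
    (fun a b => ∃ i, b = a * cs'.simple i ∧ cs'.length b = cs'.length a + 1) u w

/-- The standard parabolic subgroup `W_J` for `J ⊆ S`. -/
def parabolic (J : Set (Fin (n + 1))) : Subgroup W :=
  Subgroup.closure (cs.simple '' J)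

/-- The image `τ(J) = {s₀ sᵢ : sᵢ ∈ J, i ≠ 0}` of a subset `J ⊆ S` containing `s₀`. -/
def tauSet (J : Set (Fin (n + 1))) : Set W :=
  {x | ∃ i ∈ J, i ≠ 0 ∧ x = cs.simple 0 * cs.simple i}

/-- The set `W^J` of minimum-length coset representatives for `W/W_J`. -/
def minReps (J : Set (Fin (n + 1))) : Set W :=
  {w | ∀ i ∈ J, cs.length w < cs.length (w * cs.simple i)}


/-- `θ(w)`: the unique element of `{w, w s₀}` lying in `W' = ker χ₀`. -/
noncomputable def theta {W : Type*} [Group W] (χ₀ : W →* ℤˣ) (s0 w : W) : W :=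
  if χ₀ w = 1 then w else w * s0

/-! Call `χ₀ a = ±1` the sign of a position `a ∈ W`. For a letter `x ∈ R ∪ R⁻¹` one has
`θ(a x) = θ(a) · x s₀` when `χ₀ a = 1` and `θ(a x) = θ(a) · s₀ x` when `χ₀ a = -1`, and both
`x ↦ x s₀` and `x ↦ s₀ x` are bijections from `R ∪ R⁻¹` onto `S' = {sᵢ, s₀ sᵢ s₀ : i ≠ 0}`
(here the leaf condition enters). So `θ` translates words in `R ∪ R⁻¹` read from any position
into words in `S'` of the same length and back; this gives `ℓ_{R∪R⁻¹} = ℓ_{S'} ∘ θ` and matches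
the covers of the two weak orders. In an odd palindrome the two occurrences of a letter sit at
positions of the same sign, so odd palindromes in `R ∪ R⁻¹` translate into palindromic words
of `W'`, that is, into reflections, which matches the strong covers with the Bruhat covers. -/

section GeneralGroup

variable {α β : Type*} {r : α → α → Prop} {r' : β → β → Prop}

theorem reflTransGen_iff_of_injOn {s : Set α} {f : α → β} (hf : Set.InjOn f s)
    (hfwd : ∀ a ∈ s, ∀ b, r a b → b ∈ s ∧ r' (f a) (f b))
    (hbwd : ∀ a ∈ s, ∀ b', r' (f a) b' → ∃ b ∈ s, f b = b' ∧ r a b)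
    {a b : α} (ha : a ∈ s) (hb : b ∈ s) :
    Relation.ReflTransGen r a b ↔ Relation.ReflTransGen r' (f a) (f b) := by
  constructor
  · intro h
    suffices b ∈ s ∧ Relation.ReflTransGen r' (f a) (f b) from this.2
    clear hb
    induction h with
    | refl => exact ⟨ha, .refl⟩
    | tail _ hcd ih =>
      obtain ⟨hd, h'⟩ := hfwd _ ih.1 _ hcd
      exact ⟨hd, ih.2.tail h'⟩
  · intro h
    suffices ∀ b', Relation.ReflTransGen r' (f a) b' →
        ∃ c ∈ s, f c = b' ∧ Relation.ReflTransGen r a c by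
      obtain ⟨c, hc, hcb, hac⟩ := this _ h
      rwa [← hf hc hb hcb]
    intro b' h'
    induction h' with
    | refl => exact ⟨a, ha, rfl, .refl⟩
    | tail _ hcd ih =>
      obtain ⟨c, hc, rfl, hac⟩ := ih
      obtain ⟨d, hd, rfl, hcd'⟩ := hbwd c hc _ hcd
      exact ⟨d, hd, rfl, hac.tail hcd'⟩

theorem glen_le {A : Set W} {w : W} {l : List W} (hl : ∀ x ∈ l, x ∈ A) (hw : l.prod = w) :
    glen A w ≤ l.length :=
  Nat.sInf_le ⟨l, hl, hw, rfl⟩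

theorem exists_length_eq_glen {A : Set W} {w : W} {l : List W} (hl : ∀ x ∈ l, x ∈ A)
    (hw : l.prod = w) : ∃ l' : List W, (∀ x ∈ l', x ∈ A) ∧ l'.prod = w ∧ l'.length = glen A w :=
  Nat.sInf_mem (s := {k | ∃ l : List W, (∀ x ∈ l, x ∈ A) ∧ l.prod = w ∧ l.length = k})
    ⟨l.length, l, hl, hw, rfl⟩

variable {χ₀ : W →* ℤˣ}

theorem map_list_prod_of_odd {l : List W} (hl : ∀ x ∈ l, χ₀ x = -1) (hodd : Odd l.length) :
    χ₀ l.prod = -1 := by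
  rw [map_list_prod, List.map_congr_left hl]
  simp [hodd.neg_one_pow]

variable {s0 : W}

theorem theta_of_map_eq_one {a : W} (h : χ₀ a = 1) : theta χ₀ s0 a = a := if_pos h

theorem theta_of_map_eq_neg_one {a : W} (h : χ₀ a = -1) : theta χ₀ s0 a = a * s0 :=
  if_neg (by rw [h]; decide)

theorem map_theta (hs0 : χ₀ s0 = -1) (a : W) : χ₀ (theta χ₀ s0 a) = 1 := by
  rcases Int.units_eq_one_or (χ₀ a) with h | h
  · rw [theta_of_map_eq_one h, h]
  · rw [theta_of_map_eq_neg_one h, map_mul, h, hs0]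
    rfl

noncomputable def thetaKer (hs0 : χ₀ s0 = -1) (a : W) : χ₀.ker :=
  ⟨theta χ₀ s0 a, map_theta hs0 a⟩

theorem thetaKer_one (hs0 : χ₀ s0 = -1) : thetaKer hs0 1 = 1 :=
  Subtype.ext (theta_of_map_eq_one (map_one χ₀))

/-- The letter of `W'` that a letter `x` of `R ∪ R⁻¹` contributes to `θ` at a position of
sign `ε` (see `thetaKer_mul`). -/
def twist (s0 : W) (ε : ℤˣ) (x : W) : W :=
  if ε = 1 then x * s0 else s0 * x

theorem twist_twist (hs0 : s0 * s0 = 1) (ε : ℤˣ) (x : W) : twist s0 ε (twist s0 ε x) = x := by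
  unfold twist
  split_ifs <;> simp [mul_assoc, ← mul_assoc s0, hs0]

theorem theta_mul_of_map_eq_neg_one (hs0 : s0 * s0 = 1) {x : W} (hx : χ₀ x = -1) (a : W) :
    theta χ₀ s0 (a * x) = theta χ₀ s0 a * twist s0 (χ₀ a) x := by
  rcases Int.units_eq_one_or (χ₀ a) with h | h
  · rw [theta_of_map_eq_neg_one (by rw [map_mul, h, hx, one_mul]), theta_of_map_eq_one h,
      twist, if_pos h, mul_assoc]
  · rw [theta_of_map_eq_one (by rw [map_mul, h, hx]; rfl), theta_of_map_eq_neg_one h, twist,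
      if_neg (by rw [h]; decide), mul_assoc, ← mul_assoc s0, hs0, one_mul]

theorem thetaKer_mul (hs0 : χ₀ s0 = -1) (hs0' : s0 * s0 = 1) {a x : W} (hx : χ₀ x = -1)
    {s : χ₀.ker} (hs : (s : W) = twist s0 (χ₀ a) x) :
    thetaKer hs0 (a * x) = thetaKer hs0 a * s :=
  Subtype.ext (by rw [Subgroup.coe_mul, hs]; exact theta_mul_of_map_eq_neg_one hs0' hx a)

end GeneralGroup

theorem _root_.CoxeterSystem.IsReflection.exists_palindrome_wordProd_eq {B W : Type*}
    [Group W] {M : CoxeterMatrix B} {cs : CoxeterSystem M W} {t : W} (ht : cs.IsReflection t) :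
    ∃ ω : List B, ω.Palindrome ∧ Odd ω.length ∧ cs.wordProd ω = t := by
  obtain ⟨w, i, rfl⟩ := ht
  obtain ⟨ω, -, rfl⟩ := cs.exists_isReduced w
  refine ⟨ω ++ i :: ω.reverse, .of_reverse_eq (by simp), ⟨ω.length, by simp; omega⟩, ?_⟩
  rw [cs.wordProd_append, cs.wordProd_cons, cs.wordProd_reverse, mul_assoc]

section Alternating

theorem mul_simple_mem_alt_iff (w : W) (i : Fin (n + 1)) :
    w * cs.simple i ∈ alt cs ↔ w ∉ alt cs := by
  change Even (cs.length (w * cs.simple i)) ↔ ¬Even (cs.length w)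
  have := cs.length_mul_mod_two w (cs.simple i)
  rw [cs.length_simple] at this
  rw [Nat.even_iff, Nat.even_iff]
  omega

theorem theta_injOn (χ₀ : W →* ℤˣ) : Set.InjOn (theta χ₀ (cs.simple 0)) (alt cs) := by
  intro a ha b hb h
  unfold theta at h
  split_ifs at h
  · exact h
  · exact absurd hb ((mul_simple_mem_alt_iff cs b 0).mp (h ▸ ha))
  · exact absurd ha ((mul_simple_mem_alt_iff cs a 0).mp (h ▸ hb))
  · exact mul_right_cancel h

theorem theta_surjOn {χ₀ : W →* ℤˣ} (hχ0 : χ₀ (cs.simple 0) = -1) :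
    Set.SurjOn (theta χ₀ (cs.simple 0)) (alt cs) χ₀.ker := by
  intro v (hv : χ₀ v = 1)
  by_cases h : v ∈ alt cs
  · exact ⟨v, h, theta_of_map_eq_one hv⟩
  · refine ⟨v * cs.simple 0, (mul_simple_mem_alt_iff cs v 0).mpr h, ?_⟩
    rw [theta_of_map_eq_neg_one (by rw [map_mul, hv, hχ0, one_mul]), mul_assoc,
      cs.simple_mul_simple_self, mul_one]

theorem mem_Rsym_iff {x : W} : x ∈ Rsym cs ↔
    ∃ i, i ≠ 0 ∧ (x = cs.simple 0 * cs.simple i ∨ x = cs.simple i * cs.simple 0) := by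
  simp only [Rsym, Rset, Set.mem_union, Set.mem_inv, Set.mem_ofPred_eq, inv_eq_iff_eq_inv,
    mul_inv_rev, cs.inv_simple]
  constructor
  · rintro (⟨i, hi, h⟩ | ⟨i, hi, h⟩)
    exacts [⟨i, hi, .inl h⟩, ⟨i, hi, .inr h⟩]
  · rintro ⟨i, hi, h | h⟩
    exacts [.inl ⟨i, hi, h⟩, .inr ⟨i, hi, h⟩]

theorem Rsym_subset_alt : Rsym cs ⊆ alt cs := by
  intro x hx
  obtain ⟨i, -, rfl | rfl⟩ := (mem_Rsym_iff cs).mp hx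
  · have := cs.length_mul_mod_two (cs.simple 0) (cs.simple i)
    rw [cs.length_simple, cs.length_simple] at this
    exact Nat.even_iff.mpr this
  · have := cs.length_mul_mod_two (cs.simple i) (cs.simple 0)
    rw [cs.length_simple, cs.length_simple] at this
    exact Nat.even_iff.mpr this

theorem list_prod_mem_alt {l : List W} (hl : ∀ x ∈ l, x ∈ Rsym cs) : l.prod ∈ alt cs :=
  (alt cs).list_prod_mem fun x hx => Rsym_subset_alt cs (hl x hx)

theorem map_eq_neg_one_of_mem_Rsym {χ₀ : W →* ℤˣ} (hχ0 : χ₀ (cs.simple 0) = -1)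
    (hχj : ∀ j : Fin (n + 1), j ≠ 0 → χ₀ (cs.simple j) = 1) {x : W} (hx : x ∈ Rsym cs) :
    χ₀ x = -1 := by
  obtain ⟨i, hi, rfl | rfl⟩ := (mem_Rsym_iff cs).mp hx <;> simp [hχ0, hχj i hi]

/-- The set `{sᵢ, s₀ sᵢ s₀ : i ≠ 0}`; when `s₀` is a leaf it is the set `S'` of simple
generators of `W'`, since then `s₀ sⱼ s₀ = sⱼ` for `j ≥ 2`. -/
def Sprime : Set W :=
  {x | ∃ i, i ≠ 0 ∧ (x = cs.simple i ∨ x = cs.simple 0 * cs.simple i * cs.simple 0)}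

theorem twist_mem_Sprime_iff (ε : ℤˣ) (x : W) :
    twist (cs.simple 0) ε x ∈ Sprime cs ↔ x ∈ Rsym cs := by
  rw [mem_Rsym_iff]
  refine exists_congr fun i => and_congr_right fun _ => ?_
  unfold twist
  split_ifs
  · simp only [← eq_mul_inv_iff_mul_eq, cs.inv_simple, mul_assoc, cs.simple_mul_simple_self,
      mul_one, or_comm]
  · simp only [← eq_inv_mul_iff_mul_eq, cs.inv_simple, ← mul_assoc, cs.simple_mul_simple_self,
      one_mul]

end Alternating

theorem range_simple_eq_Sprime {M : CoxeterMatrix (Fin (n + 2))} (cs : CoxeterSystem M W)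
    (hleaf : ∀ j : Fin (n + 2), j ≠ 0 → j ≠ 1 → M 0 j = 2) {χ₀ : W →* ℤˣ}
    {M' : CoxeterMatrix (Fin (n + 1) ⊕ Unit)} (cs' : CoxeterSystem M' χ₀.ker)
    (hsimple : ∀ i : Fin (n + 1), (cs'.simple (Sum.inl i) : W) = cs.simple i.succ)
    (hsimple' : (cs'.simple (Sum.inr ()) : W) = cs.simple 0 * cs.simple 1 * cs.simple 0) :
    Set.range (fun g => (cs'.simple g : W)) = Sprime cs := by
  ext x
  constructor
  · rintro ⟨i | ⟨⟩, rfl⟩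
    · exact ⟨_, Fin.succ_ne_zero i, .inl (hsimple i)⟩
    · exact ⟨1, one_ne_zero, .inr hsimple'⟩
  · rintro ⟨i, hi, rfl | rfl⟩
    · obtain ⟨j, rfl⟩ := Fin.exists_succ_eq.mpr hi
      exact ⟨.inl j, hsimple j⟩
    · by_cases hi1 : i = 1
      · subst hi1
        exact ⟨.inr (), hsimple'⟩
      · obtain ⟨j, rfl⟩ := Fin.exists_succ_eq.mpr hi
        refine ⟨.inl j, (hsimple j).trans ?_⟩
        have h := cs.simple_mul_simple_pow 0 j.succ
        rw [hleaf _ hi hi1, pow_two, ← mul_assoc] at h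
        rw [eq_inv_of_mul_eq_one_left h, cs.inv_simple]

section Transfer

variable {χ₀ : W →* ℤˣ} (hχ0 : χ₀ (cs.simple 0) = -1) (hχR : ∀ x ∈ Rsym cs, χ₀ x = -1)
  {B' : Type*} {M' : CoxeterMatrix B'} {cs' : CoxeterSystem M' χ₀.ker}
  (hS : Set.range (fun g => (cs'.simple g : W)) = Sprime cs)

theorem thetaKer_injOn : Set.InjOn (thetaKer hχ0) (alt cs) :=
  fun _ ha _ hb h => theta_injOn cs χ₀ ha hb (congrArg Subtype.val h)

include hχR in
theorem map_mul_mul_prod_of_odd {x : W} (hx : x ∈ Rsym cs) {l : List W}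
    (hl : ∀ y ∈ l, y ∈ Rsym cs) (hodd : Odd l.length) (a : W) : χ₀ (a * x * l.prod) = χ₀ a := by
  rw [map_mul, map_mul, hχR x hx, map_list_prod_of_odd (fun y hy => hχR y (hl y hy)) hodd]
  simp

include hS in
theorem exists_simple_eq_twist {x : W} (hx : x ∈ Rsym cs) (ε : ℤˣ) :
    ∃ g, (cs'.simple g : W) = twist (cs.simple 0) ε x := by
  rwa [← twist_mem_Sprime_iff cs ε, ← hS] at hx

include hS in
theorem twist_simple_mem_Rsym (ε : ℤˣ) (g : B') :
    twist (cs.simple 0) ε (cs'.simple g) ∈ Rsym cs := by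
  rw [← twist_mem_Sprime_iff cs ε, twist_twist (cs.simple_mul_simple_self 0), ← hS]
  exact ⟨g, rfl⟩

include hχR hS in
theorem thetaKer_mul_twist_simple {a : W} {ε : ℤˣ} (ha : χ₀ a = ε) (g : B') :
    thetaKer hχ0 (a * twist (cs.simple 0) ε (cs'.simple g)) = thetaKer hχ0 a * cs'.simple g :=
  thetaKer_mul hχ0 (cs.simple_mul_simple_self 0) (hχR _ (twist_simple_mem_Rsym cs hS ε g))
    (by rw [ha, twist_twist (cs.simple_mul_simple_self 0)])

include hχR hS in
theorem exists_thetaKer_mul_eq_mul_simple {x : W} (hx : x ∈ Rsym cs) (a : W) :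
    ∃ g, thetaKer hχ0 (a * x) = thetaKer hχ0 a * cs'.simple g :=
  let ⟨g, hg⟩ := exists_simple_eq_twist cs hS hx (χ₀ a)
  ⟨g, thetaKer_mul hχ0 (cs.simple_mul_simple_self 0) (hχR x hx) hg⟩

include hχR hS in
theorem length_thetaKer_mul_prod_le {l : List W} (hl : ∀ x ∈ l, x ∈ Rsym cs) (a : W) :
    cs'.length (thetaKer hχ0 (a * l.prod)) ≤ cs'.length (thetaKer hχ0 a) + l.length := by
  induction l generalizing a with
  | nil => simp
  | cons x l ih =>
    obtain ⟨g, hg⟩ := exists_thetaKer_mul_eq_mul_simple cs hχ0 hχR hS (hl x (by simp)) a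
    have hstep := cs'.length_mul_le (thetaKer hχ0 a) (cs'.simple g)
    rw [cs'.length_simple, ← hg] at hstep
    have := ih (fun y hy => hl y (by simp [hy])) (a * x)
    rw [List.prod_cons, ← mul_assoc, List.length_cons]
    omega

include hχR hS in
theorem exists_thetaKer_mul_prod_eq_wordProd (ω : List B') (a : W) :
    ∃ l : List W, (∀ x ∈ l, x ∈ Rsym cs) ∧ l.length = ω.length ∧
      thetaKer hχ0 (a * l.prod) = thetaKer hχ0 a * cs'.wordProd ω := by
  induction ω generalizing a with
  | nil => exact ⟨[], by simp, rfl, by simp⟩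
  | cons g ω ih =>
    set x := twist (cs.simple 0) (χ₀ a) (cs'.simple g)
    obtain ⟨l, hl, hlen, hprod⟩ := ih (a * x)
    refine ⟨x :: l, ?_, by simp [hlen], ?_⟩
    · simpa using ⟨twist_simple_mem_Rsym cs hS _ g, hl⟩
    · rw [List.prod_cons, ← mul_assoc, hprod, thetaKer_mul_twist_simple cs hχ0 hχR hS rfl,
        cs'.wordProd_cons, mul_assoc]

include hχR hS in
theorem glen_eq_length_thetaKer {w : W} (hw : w ∈ alt cs) :
    glen (Rsym cs) w = cs'.length (thetaKer hχ0 w) := by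
  obtain ⟨ω, hω, hωw⟩ := cs'.exists_isReduced (thetaKer hχ0 w)
  obtain ⟨l, hl, hlen, hprod⟩ := exists_thetaKer_mul_prod_eq_wordProd cs hχ0 hχR hS ω 1
  rw [one_mul, thetaKer_one, one_mul, ← hωw] at hprod
  have hlw : l.prod = w := thetaKer_injOn cs hχ0 (list_prod_mem_alt cs hl) hw hprod
  obtain ⟨l', hl', hlw', hlen'⟩ := exists_length_eq_glen hl hlw
  apply le_antisymm
  · rw [hωw, hω.eq, ← hlen]
    exact glen_le hl hlw
  · have := length_thetaKer_mul_prod_le cs hχ0 hχR hS hl' 1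
    rw [one_mul, thetaKer_one, hlw', cs'.length_one, zero_add] at this
    omega

include hχR hS in
theorem rweak_iff_coxRweak {u w : W} (hu : u ∈ alt cs) (hw : w ∈ alt cs) :
    rweak cs u w ↔ coxRweak cs' (thetaKer hχ0 u) (thetaKer hχ0 w) := by
  have hlen {w : W} (hw : w ∈ alt cs) := glen_eq_length_thetaKer cs hχ0 hχR hS hw
  refine reflTransGen_iff_of_injOn (thetaKer_injOn cs hχ0) ?_ ?_ hu hw
  · rintro a ha _ ⟨x, hx, rfl, hax⟩
    have hb := (alt cs).mul_mem ha (Rsym_subset_alt cs hx)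
    obtain ⟨g, hg⟩ := exists_thetaKer_mul_eq_mul_simple cs hχ0 hχR hS hx a
    exact ⟨hb, g, hg, by rw [← hlen hb, ← hlen ha, hax]⟩
  · rintro a ha _ ⟨g, rfl, hag⟩
    have hx := twist_simple_mem_Rsym cs hS (χ₀ a) g
    have hb := (alt cs).mul_mem ha (Rsym_subset_alt cs hx)
    have hθ := thetaKer_mul_twist_simple cs hχ0 hχR hS (a := a) rfl g
    exact ⟨_, hb, hθ, _, hx, rfl, by rw [hlen hb, hlen ha, hθ, hag]⟩

include hχR hS in
theorem exists_isReflection_thetaKer_mul_prod {l : List W} (hl : l.Palindrome)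
    (hodd : Odd l.length) (hR : ∀ x ∈ l, x ∈ Rsym cs) (a : W) :
    ∃ t, cs'.IsReflection t ∧ thetaKer hχ0 (a * l.prod) = thetaKer hχ0 a * t := by
  induction hl generalizing a with
  | nil => simp at hodd
  | singleton x =>
    obtain ⟨g, hg⟩ := exists_thetaKer_mul_eq_mul_simple cs hχ0 hχR hS (hR x (by simp)) a
    exact ⟨_, cs'.isReflection_simple g, by simpa using hg⟩
  | @cons_concat x m _ ih =>
    have hx : x ∈ Rsym cs := hR x (by simp)
    have hmR : ∀ y ∈ m, y ∈ Rsym cs := fun y hy => hR y (by simp [hy])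
    have hmodd : Odd m.length := by simpa [Nat.odd_add_one] using hodd
    obtain ⟨g, hg⟩ := exists_simple_eq_twist cs hS hx (χ₀ a)
    obtain ⟨t, ht, hθm⟩ := ih hmodd hmR (a * x)
    have hsign := map_mul_mul_prod_of_odd cs hχR hx hmR hmodd a
    have hθx := thetaKer_mul hχ0 (cs.simple_mul_simple_self 0) (hχR x hx) hg
    have hθx' := thetaKer_mul hχ0 (cs.simple_mul_simple_self 0) (hχR x hx) (hsign ▸ hg)
    refine ⟨cs'.simple g * t * (cs'.simple g)⁻¹, ht.conj _, ?_⟩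
    rw [List.prod_cons, List.prod_append, List.prod_singleton, ← mul_assoc, ← mul_assoc, hθx',
      hθm, hθx, cs'.inv_simple, mul_assoc, mul_assoc, mul_assoc]

include hχR hS in
theorem exists_palindrome_thetaKer_mul_prod {ω : List B'} (hω : ω.Palindrome)
    (hodd : Odd ω.length) (a : W) :
    ∃ l : List W, l.Palindrome ∧ Odd l.length ∧ (∀ x ∈ l, x ∈ Rsym cs) ∧
      thetaKer hχ0 (a * l.prod) = thetaKer hχ0 a * cs'.wordProd ω := by
  induction hω generalizing a with
  | nil => simp at hodd
  | singleton g =>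
    refine ⟨[twist (cs.simple 0) (χ₀ a) (cs'.simple g)], .singleton _, by simp,
      by simpa using twist_simple_mem_Rsym cs hS _ g, ?_⟩
    simpa using thetaKer_mul_twist_simple cs hχ0 hχR hS rfl g
  | @cons_concat g ω _ ih =>
    have hωodd : Odd ω.length := by simpa [Nat.odd_add_one] using hodd
    set x := twist (cs.simple 0) (χ₀ a) (cs'.simple g)
    have hx : x ∈ Rsym cs := twist_simple_mem_Rsym cs hS (χ₀ a) g
    obtain ⟨l, hl, hlodd, hlR, hθl⟩ := ih hωodd (a * x)
    have hsign := map_mul_mul_prod_of_odd cs hχR hx hlR hlodd a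
    refine ⟨x :: (l ++ [x]), hl.cons_concat x, by simpa [Nat.odd_add_one] using hlodd, ?_, ?_⟩
    · simpa [or_imp, forall_and] using ⟨hx, hlR, hx⟩
    · rw [List.prod_cons, List.prod_append, List.prod_singleton, ← mul_assoc, ← mul_assoc,
        thetaKer_mul_twist_simple cs hχ0 hχR hS hsign g, hθl,
        thetaKer_mul_twist_simple cs hχ0 hχR hS rfl g, cs'.wordProd_cons, cs'.wordProd_append,
        cs'.wordProd_singleton, mul_assoc, mul_assoc]

include hχR hS in
theorem rstrong_iff_bruhatLE {u w : W} (hu : u ∈ alt cs) (hw : w ∈ alt cs) :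
    rstrong cs u w ↔ bruhatLE cs' (thetaKer hχ0 u) (thetaKer hχ0 w) := by
  have hlen {w : W} (hw : w ∈ alt cs) := glen_eq_length_thetaKer cs hχ0 hχR hS hw
  refine reflTransGen_iff_of_injOn (thetaKer_injOn cs hχ0) ?_ ?_ hu hw
  · rintro a ha _ ⟨_, ⟨l, hlR, hlodd, hlrev, rfl⟩, rfl, hap⟩
    have hb := (alt cs).mul_mem ha (list_prod_mem_alt cs hlR)
    obtain ⟨t, ht, hθ⟩ := exists_isReflection_thetaKer_mul_prod cs hχ0 hχR hS
      (.of_reverse_eq hlrev) hlodd hlR a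
    exact ⟨hb, t, ht, hθ, by rwa [← hlen hb, ← hlen ha]⟩
  · rintro a ha _ ⟨t, ht, rfl, hat⟩
    obtain ⟨ω, hω, hωodd, rfl⟩ := ht.exists_palindrome_wordProd_eq
    obtain ⟨l, hl, hlodd, hlR, hθ⟩ :=
      exists_palindrome_thetaKer_mul_prod cs hχ0 hχR hS hω hωodd a
    have hb := (alt cs).mul_mem ha (list_prod_mem_alt cs hlR)
    exact ⟨_, hb, hθ, _, ⟨l, hlR, hlodd, hl.reverse_eq, rfl⟩, rfl,
      by rwa [hlen hb, hlen ha, hθ]⟩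

end Transfer

theorem statement19_general {W : Type*} [Group W] {n : ℕ} {M : CoxeterMatrix (Fin (n + 2))}
    (cs : CoxeterSystem M W)
    (hleaf : ∀ j : Fin (n + 2), j ≠ 0 → j ≠ 1 → M 0 j = 2)
    (χ₀ : W →* ℤˣ) (hχ0 : χ₀ (cs.simple 0) = -1)
    (hχj : ∀ j : Fin (n + 2), j ≠ 0 → χ₀ (cs.simple j) = 1)
    (M' : CoxeterMatrix (Fin (n + 1) ⊕ Unit)) (cs' : CoxeterSystem M' χ₀.ker)
    (hsimple : ∀ i : Fin (n + 1), (cs'.simple (Sum.inl i) : W) = cs.simple i.succ)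
    (hsimple' : (cs'.simple (Sum.inr ()) : W) =
      cs.simple 0 * cs.simple 1 * cs.simple 0) :
    Set.BijOn (theta χ₀ (cs.simple 0)) (alt cs : Set W) (χ₀.ker : Set W) ∧
    (∀ w ∈ alt cs, ∀ v : χ₀.ker, (v : W) = theta χ₀ (cs.simple 0) w →
      glen (Rsym cs) w = cs'.length v) ∧
    (∀ u ∈ alt cs, ∀ w ∈ alt cs, ∀ u' w' : χ₀.ker,
      (u' : W) = theta χ₀ (cs.simple 0) u → (w' : W) = theta χ₀ (cs.simple 0) w →
      (rweak cs u w ↔ coxRweak cs' u' w')) ∧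
    (∀ u ∈ alt cs, ∀ w ∈ alt cs, ∀ u' w' : χ₀.ker,
      (u' : W) = theta χ₀ (cs.simple 0) u → (w' : W) = theta χ₀ (cs.simple 0) w →
      (rstrong cs u w ↔ bruhatLE cs' u' w')) := by
  have hχR : ∀ x ∈ Rsym cs, χ₀ x = -1 := fun _ => map_eq_neg_one_of_mem_Rsym cs hχ0 hχj
  have hS := range_simple_eq_Sprime cs hleaf cs' hsimple hsimple'
  have hθ {w : W} {v : χ₀.ker} (h : (v : W) = theta χ₀ (cs.simple 0) w) :
      v = thetaKer hχ0 w := Subtype.ext h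
  refine ⟨⟨fun w _ => MonoidHom.mem_ker.mpr (map_theta hχ0 w), theta_injOn cs χ₀,
    theta_surjOn cs hχ0⟩, ?_, ?_, ?_⟩
  · rintro w hw v hv
    rw [hθ hv]
    exact glen_eq_length_thetaKer cs hχ0 hχR hS hw
  · rintro u hu w hw u' w' hu' hw'
    rw [hθ hu', hθ hw']
    exact rweak_iff_coxRweak cs hχ0 hχR hS hu hw
  · rintro u hu w hw u' w' hu' hw'
    rw [hθ hu', hθ hw']
    exact rstrong_iff_bruhatLE cs hχ0 hχR hS hu hw

/-- When `s₀` is an even leaf, the bijection `θ : W⁺ → W' = ker χ₀` preserves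
length (`ℓ_{R ∪ R⁻¹}(w) = ℓ_{S'}(θ(w))`), and is a poset isomorphism from the
right weak (resp. right strong) order on `W⁺` to the right weak (resp. strong
Bruhat) order on the Coxeter system `(W', S')`. -/
theorem statement19 {W : Type*} [Group W] {n : ℕ} {M : CoxeterMatrix (Fin (n + 2))}
    (cs : CoxeterSystem M W)
    (hEven : Even (M 0 1)) (hleaf : ∀ j : Fin (n + 2), j ≠ 0 → j ≠ 1 → M 0 j = 2)
    (χ₀ : W →* ℤˣ) (hχ0 : χ₀ (cs.simple 0) = -1)
    (hχj : ∀ j : Fin (n + 2), j ≠ 0 → χ₀ (cs.simple j) = 1)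
    (M' : CoxeterMatrix (Fin (n + 1) ⊕ Unit)) (cs' : CoxeterSystem M' χ₀.ker)
    (hsimple : ∀ i : Fin (n + 1), (cs'.simple (Sum.inl i) : W) = cs.simple i.succ)
    (hsimple' : (cs'.simple (Sum.inr ()) : W) =
      cs.simple 0 * cs.simple 1 * cs.simple 0) :
    Set.BijOn (theta χ₀ (cs.simple 0)) (alt cs : Set W) (χ₀.ker : Set W) ∧
    (∀ w ∈ alt cs, ∀ v : χ₀.ker, (v : W) = theta χ₀ (cs.simple 0) w →
      glen (Rsym cs) w = cs'.length v) ∧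
    (∀ u ∈ alt cs, ∀ w ∈ alt cs, ∀ u' w' : χ₀.ker,
      (u' : W) = theta χ₀ (cs.simple 0) u → (w' : W) = theta χ₀ (cs.simple 0) w →
      (rweak cs u w ↔ coxRweak cs' u' w')) ∧
    (∀ u ∈ alt cs, ∀ w ∈ alt cs, ∀ u' w' : χ₀.ker,
      (u' : W) = theta χ₀ (cs.simple 0) u → (w' : W) = theta χ₀ (cs.simple 0) w →
      (rstrong cs u w ↔ bruhatLE cs' u' w')) :=
  statement19_general cs hleaf χ₀ hχ0 hχj M' cs' hsimple hsimple'

end AltCox
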